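/- The exponential mechanism p_{Y|X}(y|x) = e^{-ε·d(x,y)}/(1+(m-1)e^{-ε})^n satisfies ε-differential privacy, and for any prior p_X on D^n its distortion E[d(X,Y)] equals h(ε) = n/(1+e^{ε}/(m-1)). -/
import Mathlib


open Real Finset

lemma hd_cons {n m : ℕ} (a b : Fin m) (x y : Fin n → Fin m) :
    hammingDist (Fin.cons a x : Fin (n+1) → Fin m) (Fin.cons b y)
      = (if a = b then 0 else 1) + hammingDist x y := by
  simp [hammingDist, Finset.card_filter, Fin.sum_univ_succ]

lemma sum_cons {n m : ℕ} (f : (Fin (n+1) → Fin m) → ℝ) :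
    ∑ y, f y = ∑ b : Fin m, ∑ y : Fin n → Fin m, f (Fin.cons b y) := by
  rw [← (Fin.consEquiv (fun _ => Fin m)).sum_comp f, Fintype.sum_prod_type]
  rfl

lemma sumIteOne {m : ℕ} (a : Fin m) (E : ℝ) :
    ∑ b : Fin m, (if a = b then (1:ℝ) else E) = 1 + ((m:ℝ) - 1) * E := by
  have h : ∀ b : Fin m, (if a = b then (1:ℝ) else E) = E + (if a = b then 1 - E else 0) := by
    intro b; by_cases h : a = b <;> simp [h]
  simp only [h, Finset.sum_add_distrib, Finset.sum_const, Finset.sum_ite_eq]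
  simp [Fin.pos_iff_nonempty.mp a.pos |>.elim fun _ => trivial]
  ring

lemma sumIteZero {m : ℕ} (a : Fin m) (E : ℝ) :
    ∑ b : Fin m, (if a = b then (0:ℝ) else E) = ((m:ℝ) - 1) * E := by
  have h : ∀ b : Fin m, (if a = b then (0:ℝ) else E) = E - (if a = b then E else 0) := by
    intro b; by_cases h : a = b <;> simp [h]
  simp only [h, Finset.sum_sub_distrib, Finset.sum_const, Finset.sum_ite_eq]
  simp
  ring

lemma sumA (m : ℕ) (ε : ℝ) : ∀ (n : ℕ) (x : Fin n → Fin m),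
    ∑ y : Fin n → Fin m, Real.exp (-ε * (hammingDist x y : ℝ))
      = (1 + ((m:ℝ) - 1) * Real.exp (-ε)) ^ n := by
  intro n
  induction n with
  | zero => intro x; simp [Subsingleton.elim _ x]
  | succ n ih =>
    intro x
    rw [← Fin.cons_self_tail x, sum_cons]
    have : ∀ b y, Real.exp (-ε * (hammingDist (Fin.cons (x 0) (Fin.tail x) : Fin (n+1) → Fin m) (Fin.cons b y) : ℝ))
        = (if x 0 = b then (1:ℝ) else Real.exp (-ε)) * Real.exp (-ε * (hammingDist (Fin.tail x) y : ℝ)) := by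
      intro b y
      rw [hd_cons]
      by_cases h : x 0 = b <;>
        simp [h, Nat.cast_add, mul_add, Real.exp_add, neg_mul, ← Real.exp_add] <;> ring_nf
    simp only [this]
    simp only [← Finset.mul_sum, ih]
    rw [← Finset.sum_mul, sumIteOne, pow_succ]
    ring

lemma sumB (m : ℕ) (ε : ℝ) : ∀ (n : ℕ) (x : Fin n → Fin m),
    ∑ y : Fin n → Fin m, Real.exp (-ε * (hammingDist x y : ℝ)) * (hammingDist x y : ℝ)
      = (n : ℝ) * (((m:ℝ) - 1) * Real.exp (-ε)) * (1 + ((m:ℝ) - 1) * Real.exp (-ε)) ^ (n - 1) := by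
  intro n
  induction n with
  | zero => intro x; simp [Subsingleton.elim _ x]
  | succ n ih =>
    intro x
    rw [← Fin.cons_self_tail x, sum_cons]
    set E := Real.exp (-ε) with hE
    set Z := 1 + ((m:ℝ) - 1) * E with hZ
    have key : ∀ b (y : Fin n → Fin m),
        Real.exp (-ε * (hammingDist (Fin.cons (x 0) (Fin.tail x) : Fin (n+1) → Fin m) (Fin.cons b y) : ℝ))
          * (hammingDist (Fin.cons (x 0) (Fin.tail x) : Fin (n+1) → Fin m) (Fin.cons b y) : ℝ)
        = (if x 0 = b then (1:ℝ) else E) *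
            (Real.exp (-ε * (hammingDist (Fin.tail x) y : ℝ)) * (hammingDist (Fin.tail x) y : ℝ))
          + ((if x 0 = b then (0:ℝ) else E) * Real.exp (-ε * (hammingDist (Fin.tail x) y : ℝ))) := by
      intro b y
      rw [hd_cons]
      by_cases h : x 0 = b
      · simp [h]
      · simp only [h, if_false]
        push_cast
        rw [show -ε * (1 + (hammingDist (Fin.tail x) y : ℝ)) = -ε + -ε * (hammingDist (Fin.tail x) y : ℝ) by ring,
          Real.exp_add, hE]
        ring
    simp only [key, Finset.sum_add_distrib, ← Finset.mul_sum, ih, sumA, ← hZ]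
    rw [← Finset.sum_mul, ← Finset.sum_mul, sumIteOne, sumIteZero, ← hZ]
    cases n with
    | zero => simp
    | succ k =>
      simp only [Nat.add_sub_cancel, Nat.cast_add, Nat.cast_one]
      rw [show Z * ((((k:ℝ)+1) * (((m:ℝ)-1)*E)) * Z ^ k) = (((k:ℝ)+1) * (((m:ℝ)-1)*E)) * Z^(k+1) by ring]
      ring

/-- The exponential mechanism `p_{Y|X}(y|x) = e^{-ε d(x,y)}/(1+(m-1)e^{-ε})^n` satisfies
`ε`-differential privacy, and for any prior `p_X` its distortion `E[d(X,Y)]` equals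
`h(ε) = n/(1+e^ε/(m-1))`. -/
theorem exponential_mechanism_dp_and_distortion (n m : ℕ) (hm : 2 ≤ m) (ε : ℝ) (hε : 0 ≤ ε)
    (pX : (Fin n → Fin m) → ℝ) (hpXnn : ∀ x, 0 ≤ pX x) (hpXsum : ∑ x, pX x = 1) :
    (∀ x x' y : Fin n → Fin m, hammingDist x x' = 1 →
      Real.exp (-ε * (hammingDist x y : ℝ)) / (1 + ((m : ℝ) - 1) * Real.exp (-ε)) ^ n
        ≤ Real.exp ε *
          (Real.exp (-ε * (hammingDist x' y : ℝ))
            / (1 + ((m : ℝ) - 1) * Real.exp (-ε)) ^ n)) ∧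
    (∑ x : Fin n → Fin m, ∑ y : Fin n → Fin m,
        pX x * (Real.exp (-ε * (hammingDist x y : ℝ))
          / (1 + ((m : ℝ) - 1) * Real.exp (-ε)) ^ n) * (hammingDist x y : ℝ))
      = (n : ℝ) / (1 + Real.exp ε / ((m : ℝ) - 1)) := by
  have hm1 : (1:ℝ) ≤ (m:ℝ) - 1 := by
    have : (2:ℝ) ≤ (m:ℝ) := by exact_mod_cast hm
    linarith
  have hEpos : 0 < Real.exp (-ε) := Real.exp_pos _
  have hZpos : 0 < 1 + ((m:ℝ) - 1) * Real.exp (-ε) := by nlinarith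
  have hZn : (0:ℝ) < (1 + ((m:ℝ) - 1) * Real.exp (-ε)) ^ n := pow_pos hZpos n
  constructor
  · intro x x' y hxx'
    rw [← mul_div_assoc]
    apply div_le_div_of_nonneg_right ?_ hZn.le |>.trans_eq rfl
    rw [← Real.exp_add]
    apply Real.exp_le_exp.mpr
    have htri : (hammingDist x' y : ℝ) ≤ (hammingDist x y : ℝ) + 1 := by
      have h1 := hammingDist_triangle x' x y
      rw [hammingDist_comm x' x, hxx'] at h1
      exact_mod_cast by omega
    nlinarith [htri]
  · have step : ∀ x : Fin n → Fin m,
        ∑ y : Fin n → Fin m, pX x * (Real.exp (-ε * (hammingDist x y : ℝ))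
            / (1 + ((m : ℝ) - 1) * Real.exp (-ε)) ^ n) * (hammingDist x y : ℝ)
        = pX x * (((n:ℝ) * (((m:ℝ) - 1) * Real.exp (-ε))
            * (1 + ((m:ℝ) - 1) * Real.exp (-ε)) ^ (n - 1))
            / (1 + ((m:ℝ) - 1) * Real.exp (-ε)) ^ n) := by
      intro x
      rw [← sumB m ε n x, Finset.sum_div, Finset.mul_sum]
      exact Finset.sum_congr rfl fun y _ => by ring
    simp only [step]
    rw [← Finset.sum_mul, hpXsum, one_mul]
    have hZne : (1 + ((m:ℝ) - 1) * Real.exp (-ε)) ≠ 0 := ne_of_gt hZpos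
    have hm1ne : ((m:ℝ) - 1) ≠ 0 := by linarith
    have hexpne : Real.exp ε ≠ 0 := (Real.exp_pos ε).ne'
    cases n with
    | zero => simp
    | succ k =>
      simp only [Nat.add_sub_cancel]
      rw [pow_succ', mul_div_mul_right _ _ (pow_ne_zero k hZne)]
      rw [Real.exp_neg]
      field_simp
      ring
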